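/- Let x : ℕ → ℝ be a nonnegative nonincreasing sequence, N a positive integer, T the geometric-mean transform, and σ_N the N-fold dilation. If T²x ≤ N·σ_N(Tx) pointwise, then Tx ≺≺_log N·σ_N x. -/

import Mathlib

/-!
Write `n = N q + r` with `r < N`. The product `∏_{k ≤ n} (Tx)(k)` is `(T²x)(n)^(n+1)`, which the
hypothesis bounds by `N^(n+1) (Tx)(q)^(n+1)`, while `∏_{k ≤ n} N (σ_N x)(k)` equals
`N^(n+1) (∏_{j<q} x j)^N x(q)^(r+1)`. Since `(Tx)(q)^(q+1) = (∏_{j<q} x j) x(q)`, raising to the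
`N`-th power gives `(Tx)(q)^(N(q+1)) = (∏_{j<q} x j)^N x(q)^N`, and the remaining comparison of
the `N - r - 1` missing factors is `x(q) ≤ (Tx)(q)`, the geometric mean of a nonincreasing
sequence dominating its last term.
-/

/-- The geometric-mean transform `(Tx)(k) = (∏_{m=0}^k x(m))^(1/(k+1))`. -/
noncomputable def opT (x : ℕ → ℝ) (k : ℕ) : ℝ :=
  (∏ m ∈ Finset.range (k + 1), x m) ^ (1 / ((k : ℝ) + 1))

/-- The dilation `(σ_N x)(k) = x(⌊k/N⌋)`. -/
def dil (N : ℕ) (x : ℕ → ℝ) (k : ℕ) : ℝ := x (k / N)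

lemma opT_nonneg {x : ℕ → ℝ} (hx0 : ∀ k, 0 ≤ x k) (k : ℕ) : 0 ≤ opT x k :=
  Real.rpow_nonneg (Finset.prod_nonneg fun i _ => hx0 i) _

lemma opT_pow_succ {x : ℕ → ℝ} (hx0 : ∀ k, 0 ≤ x k) (k : ℕ) :
    opT x k ^ (k + 1) = ∏ m ∈ Finset.range (k + 1), x m := by
  have hk : 1 / ((k : ℝ) + 1) * ((k + 1 : ℕ) : ℝ) = 1 := by
    push_cast
    field_simp
  rw [opT, ← Real.rpow_natCast, ← Real.rpow_mul (Finset.prod_nonneg fun i _ => hx0 i), hk,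
    Real.rpow_one]

lemma prod_range_opT {x : ℕ → ℝ} (hx0 : ∀ k, 0 ≤ x k) (n : ℕ) :
    ∏ k ∈ Finset.range (n + 1), opT x k = opT (opT x) n ^ (n + 1) :=
  (opT_pow_succ (opT_nonneg hx0) n).symm

lemma le_opT {x : ℕ → ℝ} (hx0 : ∀ k, 0 ≤ x k) (hx : Antitone x) (k : ℕ) : x k ≤ opT x k := by
  have hprod : x k ^ (k + 1) ≤ opT x k ^ (k + 1) := by
    calc x k ^ (k + 1) = ∏ _m ∈ Finset.range (k + 1), x k := by simp
      _ ≤ ∏ m ∈ Finset.range (k + 1), x m :=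
        Finset.prod_le_prod (fun _ _ => hx0 k)
          fun m hm => hx (Nat.lt_succ_iff.mp (Finset.mem_range.mp hm))
      _ = opT x k ^ (k + 1) := (opT_pow_succ hx0 k).symm
  exact le_of_pow_le_pow_left₀ k.succ_ne_zero (opT_nonneg hx0 k) hprod

lemma prod_range_dil_block (x : ℕ → ℝ) {N m : ℕ} (hN : 0 < N) (hm : m ≤ N) (q : ℕ) :
    ∏ i ∈ Finset.range m, dil N x (N * q + i) = x q ^ m := by
  rw [Finset.prod_eq_pow_card (b := x q) fun i hi => ?_, Finset.card_range]
  have hiN : i < N := (Finset.mem_range.mp hi).trans_le hm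
  rw [dil, add_comm, Nat.add_mul_div_left _ _ hN, Nat.div_eq_of_lt hiN, zero_add]

lemma prod_range_mul_dil (x : ℕ → ℝ) {N : ℕ} (hN : 0 < N) (q : ℕ) :
    ∏ k ∈ Finset.range (N * q), dil N x k = (∏ j ∈ Finset.range q, x j) ^ N := by
  induction q with
  | zero => simp
  | succ q ih =>
    rw [Nat.mul_succ, Finset.prod_range_add, ih, prod_range_dil_block x hN le_rfl,
      Finset.prod_range_succ, mul_pow]

lemma prod_range_dil (x : ℕ → ℝ) {N m : ℕ} (hN : 0 < N) (hm : m ≤ N) (q : ℕ) :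
    ∏ k ∈ Finset.range (N * q + m), dil N x k = (∏ j ∈ Finset.range q, x j) ^ N * x q ^ m := by
  rw [Finset.prod_range_add, prod_range_mul_dil x hN, prod_range_dil_block x hN hm]

lemma pow_le_pow_mul_pow_of_pow_succ_eq {G a P : ℝ} {N q r : ℕ} (ha : 0 ≤ a) (haG : a ≤ G)
    (hG : G ^ (q + 1) = P * a) (hr : r < N) :
    G ^ (N * q + r + 1) ≤ P ^ N * a ^ (r + 1) := by
  rcases ha.eq_or_lt with rfl | ha
  · have : G = 0 := pow_eq_zero_iff q.succ_ne_zero |>.mp (by rw [hG, mul_zero])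
    simp [this]
  set s := N - (r + 1)
  -- The `s` factors missing from `G ^ (N * (q + 1))` are each replaced by the smaller `a`.
  have key : G ^ (N * q + r + 1) * a ^ s ≤ P ^ N * a ^ (r + 1) * a ^ s :=
    calc G ^ (N * q + r + 1) * a ^ s ≤ G ^ (N * q + r + 1) * G ^ s := by
          gcongr
          exact pow_nonneg (ha.le.trans haG) _
      _ = (G ^ (q + 1)) ^ N := by rw [← pow_add, ← pow_mul]; congr 1; grind
      _ = P ^ N * a ^ (r + 1) * a ^ s := by rw [hG, mul_pow, mul_assoc, ← pow_add]; congr 3; omega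
  exact le_of_mul_le_mul_right key (pow_pos ha s)

/-- For a nonnegative nonincreasing sequence `x` and `N ≥ 1`:
if `T²x ≤ N·σ_N(Tx)` pointwise, then `Tx ≺≺_log N·σ_N x`. -/
theorem stmt_10 (x : ℕ → ℝ) (hx0 : ∀ k, 0 ≤ x k) (hx : Antitone x) (N : ℕ) (hN : 0 < N)
    (h : ∀ k, opT (opT x) k ≤ (N : ℝ) * dil N (opT x) k) :
    ∀ n, ∏ k ∈ Finset.range (n + 1), opT x k ≤
      ∏ k ∈ Finset.range (n + 1), ((N : ℝ) * dil N x k) := by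
  intro n
  set q := n / N
  set r := n % N
  have hn : N * q + r = n := Nat.div_add_mod n N
  have hr : r < N := Nat.mod_lt n hN
  have hGq : opT x q ^ (q + 1) = (∏ j ∈ Finset.range q, x j) * x q := by
    rw [opT_pow_succ hx0, Finset.prod_range_succ]
  calc ∏ k ∈ Finset.range (n + 1), opT x k = opT (opT x) n ^ (n + 1) := prod_range_opT hx0 n
    _ ≤ ((N : ℝ) * opT x q) ^ (n + 1) :=
        pow_le_pow_left₀ (opT_nonneg (opT_nonneg hx0) n) (h n) _
    _ = (N : ℝ) ^ (n + 1) * opT x q ^ (N * q + r + 1) := by rw [mul_pow, hn]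
    _ ≤ (N : ℝ) ^ (n + 1) * ((∏ j ∈ Finset.range q, x j) ^ N * x q ^ (r + 1)) := by
        gcongr
        exact pow_le_pow_mul_pow_of_pow_succ_eq (hx0 q) (le_opT hx0 hx q) hGq hr
    _ = ∏ k ∈ Finset.range (n + 1), ((N : ℝ) * dil N x k) := by
        rw [Finset.prod_mul_distrib, Finset.prod_const, Finset.card_range, ← hn, add_assoc,
          prod_range_dil x hN hr q]
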